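/- Let X₁,…,Xₙ be independent, Xᵢ ~ Exp(αᵢ) with pairwise distinct αᵢ, and let Sₙ = ΣᵢXᵢ. Let c > 0. If Z has density f_Z(t) = Σᵢ (1/Pᵢ) f_{Xᵢ}(t) with Pᵢ = ∏_{j≠i}(1−αᵢ/αⱼ), and g(x) = x^c is applied via the mixed construction, then h(t) = Σᵢ (1/PWᵢ) f_{Yᵢ}(t) is a valid probability density, where Yᵢ = Xᵢ^c ~ Weibull(1/c, αᵢ^{-c}) and PWᵢ = ∏_{j≠i}(1 − (λⱼ/λᵢ)^k) with k = 1/c, λᵢ = αᵢ^{-c}. -/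

import Mathlib

open MeasureTheory Finset Real

section Aux

open Polynomial

lemma mhw_eval_zero_basis {ι : Type*} [DecidableEq ι] (s : Finset ι) (v : ι → ℝ) (i : ι) :
    Polynomial.eval 0 (Lagrange.basis s v i) = ∏ j ∈ s.erase i, v j / (v j - v i) := by
  unfold Lagrange.basis
  rw [Polynomial.eval_prod]
  refine Finset.prod_congr rfl fun j _ => ?_
  simp only [Lagrange.basisDivisor, eval_mul, eval_C, eval_sub, eval_X]
  rw [zero_sub, div_eq_mul_inv, ← neg_sub (v i), inv_neg]
  ring

lemma mhw_lagrange_sum_one {ι : Type*} [DecidableEq ι] (s : Finset ι) (v : ι → ℝ)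
    (hvs : Set.InjOn v s) (hs : s.Nonempty) :
    ∑ i ∈ s, ∏ j ∈ s.erase i, v j / (v j - v i) = 1 := by
  have h := congrArg (Polynomial.eval 0) (Lagrange.sum_basis hvs hs)
  rw [Polynomial.eval_finset_sum, Polynomial.eval_one] at h
  simpa [mhw_eval_zero_basis] using h

lemma mhw_lagrange_sum_zero {ι : Type*} [DecidableEq ι] (s : Finset ι) (v : ι → ℝ)
    (hvs : Set.InjOn v s) (hs : 2 ≤ s.card) :
    ∑ i ∈ s, v i * ∏ j ∈ s.erase i, v j / (v j - v i) = 0 := by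
  have hdeg : (X : ℝ[X]).degree < s.card := by
    rw [Polynomial.degree_X]
    exact_mod_cast Nat.lt_of_lt_of_le one_lt_two hs
  have h := congrArg (Polynomial.eval 0) (Lagrange.eq_interpolate hvs hdeg)
  rw [Lagrange.interpolate_apply, Polynomial.eval_finset_sum] at h
  simp only [Polynomial.eval_mul, Polynomial.eval_C, Polynomial.eval_X,
    mhw_eval_zero_basis] at h
  exact h.symm

end Aux

/-- The hypoexponential density expression over a finite set of distinct rates. -/
noncomputable def mhwG (A : Finset ℝ) (t : ℝ) : ℝ :=
  ∑ a ∈ A, (∏ b ∈ A.erase a, b / (b - a)) * (a * Real.exp (-(a * t)))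

lemma mhwG_nonneg : ∀ (A : Finset ℝ), (∀ a ∈ A, 0 < a) → ∀ t, 0 ≤ t → 0 ≤ mhwG A t := by
  intro A
  induction A using Finset.induction_on with
  | empty => intro _ t _; simp [mhwG]
  | @insert a A ha IH =>
    intro hpos t ht
    have hapos : 0 < a := hpos a (mem_insert_self a A)
    rcases A.eq_empty_or_nonempty with rfl | hAne
    · simp only [mhwG, insert_empty_eq, sum_singleton, erase_singleton, prod_empty, one_mul]
      positivity
    · set S := insert a A with hS
      have hAposs : ∀ b ∈ A, 0 < b := fun b hb => hpos b (mem_insert_of_mem hb)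
      set h : ℝ → ℝ := fun t =>
        ∑ x ∈ S, (∏ b ∈ S.erase x, b / (b - x)) * (x * Real.exp ((a - x) * t)) with hh
      have h1 : ∀ t, mhwG S t = Real.exp (-(a * t)) * h t := by
        intro t
        rw [hh, mhwG, Finset.mul_sum]
        refine Finset.sum_congr rfl fun x _ => ?_
        rw [show -(x * t) = -(a * t) + (a - x) * t by ring, Real.exp_add]
        ring
      have h2 : h 0 = 0 := by
        have hc := mhw_lagrange_sum_zero S id (Function.injective_id.injOn) ?_
        · simp only [id_eq] at hc
          rw [hh]
          simp only [mul_zero, Real.exp_zero, mul_one]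
          rw [← hc]
          exact Finset.sum_congr rfl fun x _ => mul_comm _ _
        · rw [hS, card_insert_of_notMem ha]
          have := hAne.card_pos
          omega
      have h3 : ∀ t, HasDerivAt h (a * Real.exp (a * t) * mhwG A t) t := by
        intro t
        have hd : HasDerivAt h
            (∑ x ∈ S, (∏ b ∈ S.erase x, b / (b - x)) *
              (x * (Real.exp ((a - x) * t) * (a - x)))) t := by
          rw [hh]
          apply HasDerivAt.fun_sum
          intro x _
          have := ((((hasDerivAt_id t).const_mul (a - x)).exp).const_mul x).const_mul
            (∏ b ∈ S.erase x, b / (b - x))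
          simpa using this
        convert hd using 1
        rw [mhwG, hS, Finset.mul_sum, Finset.sum_insert ha]
        have hterm0 : (∏ b ∈ (insert a A).erase a, b / (b - a)) *
            (a * (Real.exp ((a - a) * t) * (a - a))) = 0 := by simp
        rw [hterm0, zero_add]
        refine Finset.sum_congr rfl fun b hb => ?_
        have hab : a ≠ b := fun hEq => ha (hEq ▸ hb)
        have hbpos := hAposs b hb
        rw [Finset.erase_insert_of_ne hab,
          Finset.prod_insert (fun hmem => ha (Finset.mem_of_mem_erase hmem))]
        rw [show (a - b) * t = a * t + -(b * t) by ring, Real.exp_add]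
        have hab' : a - b ≠ 0 := sub_ne_zero.mpr hab
        set C := ∏ x ∈ A.erase b, x / (x - b) with hC
        field_simp
      have hcont : Continuous h :=
        continuous_iff_continuousAt.mpr fun s => (h3 s).continuousAt
      have hmono : MonotoneOn h (Set.Ici (0:ℝ)) := by
        apply monotoneOn_of_deriv_nonneg (convex_Ici 0) hcont.continuousOn
        · exact fun s _ => (h3 s).differentiableAt.differentiableWithinAt
        · intro s hs
          rw [interior_Ici] at hs
          rw [(h3 s).deriv]
          have := IH hAposs s (le_of_lt hs)
          positivity
      have hht : 0 ≤ h t := by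
        have := hmono Set.self_mem_Ici ht ht
        rw [h2] at this
        exact this
      rw [h1 t]
      positivity

/-- The Mixed Hypoexponential Weibull function is a valid probability density:
for pairwise distinct `αᵢ > 0` and `c > 0`, with `k = 1/c`, `λᵢ = αᵢ^{-c}`,
Weibull densities `fᵢ(t) = (k/λᵢ)(t/λᵢ)^{k-1}·exp(-(t/λᵢ)^k)` for `t > 0`, and
`PWᵢ = ∏_{j≠i}(1 - (λⱼ/λᵢ)^k)`, the function `t ↦ ∑ᵢ (1/PWᵢ)·fᵢ(t)` is
nonnegative and integrates to 1. -/
theorem stmt_12 (n : ℕ) (hn : 0 < n) (α : Fin n → ℝ)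
    (hpos : ∀ i, 0 < α i) (hdist : ∀ i j, i ≠ j → α i ≠ α j)
    (c : ℝ) (hc : 0 < c)
    (k : ℝ) (lam : Fin n → ℝ) (hk : k = 1 / c) (hlam : ∀ i, lam i = α i ^ (-c))
    (w : Fin n → ℝ → ℝ)
    (hw : ∀ i t, w i t = if 0 < t then
      (k / lam i) * (t / lam i) ^ (k - 1) * Real.exp (-((t / lam i) ^ k)) else 0)
    (PW : Fin n → ℝ)
    (hPW : ∀ i, PW i = ∏ j ∈ univ.erase i, (1 - (lam j / lam i) ^ k)) :
    (∀ t, 0 ≤ ∑ i, (1 / PW i) * w i t) ∧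
      ∫ t : ℝ, ∑ i, (1 / PW i) * w i t = 1 := by
  have hinj : Function.Injective α := fun i j hij => by
    by_contra hne; exact hdist i j hne hij
  have hkpos : 0 < k := hk ▸ by positivity
  have hck : c * k = 1 := by rw [hk]; field_simp
  -- simplification of the ratio
  have hratio : ∀ i j : Fin n, (lam j / lam i) ^ k = α i / α j := by
    intro i j
    rw [hlam, hlam, ← Real.div_rpow (hpos j).le (hpos i).le,
      ← Real.rpow_mul (div_nonneg (hpos j).le (hpos i).le),
      show -c * k = -1 by rw [neg_mul, hck], Real.rpow_neg_one, inv_div]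
  -- simplification of PW inverse
  have hPW' : ∀ i, 1 / PW i = ∏ j ∈ univ.erase i, α j / (α j - α i) := by
    intro i
    rw [hPW, one_div, ← Finset.prod_inv_distrib]
    refine Finset.prod_congr rfl fun j _ => ?_
    rw [hratio]
    have hj := (hpos j).ne'
    rw [show (1 : ℝ) - α i / α j = (α j - α i) / α j by field_simp, inv_div]
  -- simplification of the Weibull density
  have hwsimp : ∀ (i : Fin n) (t : ℝ), 0 < t →
      w i t = k * α i * t ^ (k - 1) * Real.exp (-(α i * t ^ k)) := by
    intro i t ht
    rw [hw, if_pos ht, hlam]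
    have hβ := hpos i
    have hdiv : t / α i ^ (-c) = t * α i ^ c := by
      rw [Real.rpow_neg hβ.le, div_inv_eq_mul]
    have hkd : k / α i ^ (-c) = k * α i ^ c := by
      rw [Real.rpow_neg hβ.le, div_inv_eq_mul]
    rw [hdiv, hkd,
      Real.mul_rpow ht.le (Real.rpow_nonneg hβ.le c),
      Real.mul_rpow ht.le (Real.rpow_nonneg hβ.le c),
      ← Real.rpow_mul hβ.le c k, hck, Real.rpow_one,
      ← Real.rpow_mul hβ.le c (k - 1)]
    have hfin : α i ^ c * α i ^ (c * (k - 1)) = α i := by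
      rw [← Real.rpow_add hβ, show c + c * (k - 1) = c * k by ring, hck, Real.rpow_one]
    calc k * α i ^ c * (t ^ (k - 1) * α i ^ (c * (k - 1))) *
          Real.exp (-(t ^ k * α i))
        = k * (α i ^ c * α i ^ (c * (k - 1))) * t ^ (k - 1) *
          Real.exp (-(α i * t ^ k)) := by rw [mul_comm (t ^ k) (α i)]; ring
      _ = k * α i * t ^ (k - 1) * Real.exp (-(α i * t ^ k)) := by rw [hfin]
  -- the image finset
  set A : Finset ℝ := Finset.image α Finset.univ with hA
  have hAmem : ∀ a ∈ A, 0 < a := by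
    intro a haA
    obtain ⟨i, _, rfl⟩ := Finset.mem_image.mp haA
    exact hpos i
  -- transfer of the sum
  have htransfer : ∀ s : ℝ,
      ∑ i, (∏ j ∈ univ.erase i, α j / (α j - α i)) * (α i * Real.exp (-(α i * s)))
        = mhwG A s := by
    intro s
    rw [mhwG, hA, Finset.sum_image (fun i _ j _ h => hinj h)]
    refine Finset.sum_congr rfl fun i _ => ?_
    congr 1
    rw [← Finset.image_erase hinj, Finset.prod_image
      (fun a _ b _ h => hinj h)]
  -- integrability and integral of each Weibull density
  have hweib : ∀ i : Fin n, Integrable (w i) ∧ ∫ t : ℝ, w i t = 1 := by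
    intro i
    set F : ℝ → ℝ := fun t => k * α i * t ^ (k - 1) * Real.exp (-(α i * t ^ k)) with hF
    set G : ℝ → ℝ := fun t => -Real.exp (-(α i * t ^ k)) with hG
    have hderiv : ∀ x ∈ Set.Ioi (0:ℝ), HasDerivAt G (F x) x := by
      intro x hx
      have h1 : HasDerivAt (fun t : ℝ => t ^ k) (k * x ^ (k - 1)) x :=
        Real.hasDerivAt_rpow_const (Or.inl (ne_of_gt hx))
      have h2 := (((h1.const_mul (α i)).neg).exp).neg
      simp only [Pi.neg_def] at h2
      refine h2.congr_deriv ?_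
      simp only [hF]
      ring
    have hcont : ContinuousWithinAt G (Set.Ici 0) 0 := by
      have h1 : ContinuousAt (fun t : ℝ => t ^ k) 0 :=
        Real.continuousAt_rpow_const 0 k (Or.inr hkpos.le)
      exact ((Real.continuous_exp.continuousAt.comp ((h1.const_mul (α i)).neg)).neg).continuousWithinAt
    have hFpos : ∀ x ∈ Set.Ioi (0:ℝ), 0 ≤ F x := by
      intro x hx
      have hx' : (0:ℝ) < x := hx
      have hα := hpos i
      simp only [hF]
      positivity
    have htends : Filter.Tendsto G Filter.atTop (nhds 0) := by
      have h1 : Filter.Tendsto (fun t : ℝ => α i * t ^ k) Filter.atTop Filter.atTop :=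
        (tendsto_rpow_atTop hkpos).const_mul_atTop (hpos i)
      have h2 : Filter.Tendsto (fun t : ℝ => Real.exp (-(α i * t ^ k)))
          Filter.atTop (nhds 0) :=
        Real.tendsto_exp_atBot.comp (Filter.tendsto_neg_atTop_atBot.comp h1)
      simpa [hG] using h2.neg
    have hInt : IntegrableOn F (Set.Ioi 0) :=
      integrableOn_Ioi_deriv_of_nonneg hcont hderiv hFpos htends
    have hG0 : G 0 = -1 := by
      simp [hG, Real.zero_rpow (ne_of_gt hkpos)]
    have hIval : ∫ x in Set.Ioi (0:ℝ), F x = 1 := by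
      rw [integral_Ioi_of_hasDerivAt_of_nonneg hcont hderiv hFpos htends, hG0]
      ring
    have hwi : w i = Set.indicator (Set.Ioi 0) F := by
      funext t
      by_cases ht : 0 < t
      · rw [Set.indicator_of_mem (Set.mem_Ioi.mpr ht), hwsimp i t ht]
      · rw [Set.indicator_of_notMem (by simpa using ht), hw, if_neg ht]
    constructor
    · rw [hwi]
      exact (integrable_indicator_iff measurableSet_Ioi).2 hInt
    · rw [hwi, MeasureTheory.integral_indicator measurableSet_Ioi]
      exact hIval
  constructor
  · -- nonnegativity
    intro t
    by_cases ht : 0 < t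
    · have heq : ∑ i, (1 / PW i) * w i t
          = k * t ^ (k - 1) * mhwG A (t ^ k) := by
        rw [← htransfer (t ^ k), Finset.mul_sum]
        refine Finset.sum_congr rfl fun i _ => ?_
        rw [hPW' i, hwsimp i t ht]
        ring
      rw [heq]
      have h1 := mhwG_nonneg A hAmem (t ^ k) (Real.rpow_nonneg ht.le k)
      have h2 : (0:ℝ) ≤ t ^ (k - 1) := Real.rpow_nonneg ht.le _
      positivity
    · apply Finset.sum_nonneg
      intro i _
      rw [hw, if_neg ht, mul_zero]
  · -- the integral
    rw [MeasureTheory.integral_finset_sum _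
      (fun i _ => ((hweib i).1.const_mul (1 / PW i)))]
    have : ∀ i : Fin n, ∫ t : ℝ, (1 / PW i) * w i t = 1 / PW i := by
      intro i
      rw [MeasureTheory.integral_const_mul, (hweib i).2, mul_one]
    rw [Finset.sum_congr rfl fun i _ => this i]
    have huniv : (Finset.univ : Finset (Fin n)).Nonempty := by
      have : Nonempty (Fin n) := ⟨⟨0, hn⟩⟩
      exact Finset.univ_nonempty
    rw [Finset.sum_congr rfl fun i _ => hPW' i]
    exact mhw_lagrange_sum_one Finset.univ α (hinj.injOn) huniv
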